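/- Let X⋆ ∈ ℝ^{n×n} be a symmetric positive semidefinite solution of the SDARE, X⋆ = D(X⋆), and set A⋆ = (I_{rn} + BBᵀ(X⋆ ⊗ I_r))⁻¹A and B⋆ = (I_{rn} + BBᵀ(X⋆ ⊗ I_r))⁻¹BBᵀ. Suppose there exists a symmetric positive definite Y ∈ ℝ^{n×n} with B⋆ + A⋆ Y A⋆ᵀ ⪯ Y ⊗ I_r and X⋆^{1/2} Y X⋆^{1/2} ≺ I_n, where X⋆^{1/2} is the positive semidefinite square root of X⋆. Define the linear map 𝒮 : ℝ^{n×n} → ℝ^{n×n}, 𝒮(S) = A⋆ᵀ(S ⊗ I_r)A⋆, and let 𝒮^t denote its t-fold iterate. Then I_n − Y X⋆ is invertible and, for every t ≥ 0, the fixed point iterates satisfy X⋆ − X_t ⪯ 𝒮^t( X⋆ (I_n − Y X⋆)⁻¹ ) (the R-linear convergence bound in Theorem on convergence of fixed point iteration for SDAREs, part 3). -/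

import Mathlib

open Matrix
open scoped Kronecker

/-- The SDARE Riccati operator `D(X) = Aᵀ (X ⊗ I_r) (I + B Bᵀ (X ⊗ I_r))⁻¹ A + Cᵀ C`,
with `rn` realized as the index type `Fin n × Fin r`. -/
noncomputable def Dop {n m l r : ℕ}
    (A : Matrix (Fin n × Fin r) (Fin n) ℝ)
    (B : Matrix (Fin n × Fin r) (Fin m) ℝ)
    (C : Matrix (Fin l) (Fin n) ℝ)
    (X : Matrix (Fin n) (Fin n) ℝ) : Matrix (Fin n) (Fin n) ℝ :=
  Aᵀ * (X ⊗ₖ (1 : Matrix (Fin r) (Fin r) ℝ)) *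
      (1 + B * Bᵀ * (X ⊗ₖ (1 : Matrix (Fin r) (Fin r) ℝ)))⁻¹ * A + Cᵀ * C

/-- The square root of a positive semidefinite matrix, spelled out as the removed
`Matrix.PosSemidef.sqrt` of the older Mathlib defined it. -/
noncomputable def psdSqrtOld {n : ℕ} {X : Matrix (Fin n) (Fin n) ℝ} (hX : X.PosSemidef) :
    Matrix (Fin n) (Fin n) ℝ :=
  (hX.1.eigenvectorUnitary : Matrix (Fin n) (Fin n) ℝ) *
    diagonal (fun i => ((Real.sqrt (hX.1.eigenvalues i) : ℝ) : ℝ)) *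
    (star (hX.1.eigenvectorUnitary : Matrix (Fin n) (Fin n) ℝ))

set_option linter.unusedSectionVars false
set_option linter.unusedVariables false
set_option maxHeartbeats 1000000

namespace SDARE

variable {a b c N : Type*} [Fintype a] [Fintype b] [Fintype c] [Fintype N]
  [DecidableEq a] [DecidableEq b] [DecidableEq c] [DecidableEq N]

  [DecidableEq a] [DecidableEq b] [DecidableEq N]

lemma eq_mul_inv_of_mul_eq {X Z : Matrix a b ℝ} {S : Matrix b b ℝ} (hS : IsUnit S.det)
    (h : X * S = Z) : Z * S⁻¹ = X := by
  rw [← h, Matrix.mul_assoc, Matrix.mul_nonsing_inv _ hS, Matrix.mul_one]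

lemma eq_inv_mul_of_eq_mul {X Z : Matrix a b ℝ} {S : Matrix a a ℝ} (hS : IsUnit S.det)
    (h : S * X = Z) : S⁻¹ * Z = X := by
  rw [← h, ← Matrix.mul_assoc, Matrix.nonsing_inv_mul _ hS, Matrix.one_mul]

lemma pushthrough (K : Matrix a b ℝ) (W : Matrix b a ℝ)
    (h : IsUnit ((1 : Matrix b b ℝ) - W * K).det) :
    IsUnit ((1 : Matrix a a ℝ) - K * W).det ∧
      K * ((1 : Matrix b b ℝ) - W * K)⁻¹ = ((1 : Matrix a a ℝ) - K * W)⁻¹ * K := by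
  have hd : ((1 : Matrix a a ℝ) - K * W).det = ((1 : Matrix b b ℝ) - W * K).det :=
    Matrix.det_one_sub_mul_comm K W
  have hu : IsUnit ((1 : Matrix a a ℝ) - K * W).det := hd ▸ h
  refine ⟨hu, ?_⟩
  have h2 : ((1 : Matrix a a ℝ) - K * W) * K = K * ((1 : Matrix b b ℝ) - W * K) := by
    rw [Matrix.sub_mul, Matrix.one_mul, Matrix.mul_sub, Matrix.mul_one, Matrix.mul_assoc]
  have h3 : (((1 : Matrix a a ℝ) - K * W) * K) * ((1 : Matrix b b ℝ) - W * K)⁻¹ = K := by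
    rw [h2, Matrix.mul_assoc, Matrix.mul_nonsing_inv _ h, Matrix.mul_one]
  have h4 : ((1 : Matrix a a ℝ) - K * W) * (K * ((1 : Matrix b b ℝ) - W * K)⁻¹)
      = K := by rw [← Matrix.mul_assoc]; exact h3
  exact (eq_inv_mul_of_eq_mul hu h4).symm

lemma sandwich (v : Matrix a b ℝ) (M : Matrix b b ℝ)
    (h : IsUnit ((1 : Matrix a a ℝ) - v * M * vᵀ).det) :
    IsUnit ((1 : Matrix b b ℝ) - M * (vᵀ * v)).det ∧
      vᵀ * v * ((1 : Matrix b b ℝ) - M * (vᵀ * v))⁻¹ =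
        vᵀ * ((1 : Matrix a a ℝ) - v * M * vᵀ)⁻¹ * v := by
  have hd : ((1 : Matrix b b ℝ) - M * (vᵀ * v)).det
      = ((1 : Matrix a a ℝ) - v * M * vᵀ).det := by
    rw [← Matrix.mul_assoc, Matrix.det_one_sub_mul_comm, ← Matrix.mul_assoc]
  have hu : IsUnit ((1 : Matrix b b ℝ) - M * (vᵀ * v)).det := hd ▸ h
  refine ⟨hu, ?_⟩
  have hcomm : v * ((1 : Matrix b b ℝ) - M * (vᵀ * v)) =
      ((1 : Matrix a a ℝ) - v * M * vᵀ) * v := by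
    rw [Matrix.mul_sub, Matrix.mul_one, Matrix.sub_mul, Matrix.one_mul]
    simp only [Matrix.mul_assoc]
  have h2 : (vᵀ * ((1 : Matrix a a ℝ) - v * M * vᵀ)⁻¹ * v) *
      ((1 : Matrix b b ℝ) - M * (vᵀ * v)) = vᵀ * v := by
    calc (vᵀ * ((1 : Matrix a a ℝ) - v * M * vᵀ)⁻¹ * v) * ((1 : Matrix b b ℝ) - M * (vᵀ * v))
        = vᵀ * (((1 : Matrix a a ℝ) - v * M * vᵀ)⁻¹ * (v * ((1 : Matrix b b ℝ) - M * (vᵀ * v)))) := by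
          simp only [Matrix.mul_assoc]
      _ = vᵀ * (((1 : Matrix a a ℝ) - v * M * vᵀ)⁻¹ * (((1 : Matrix a a ℝ) - v * M * vᵀ) * v)) := by
          rw [hcomm]
      _ = vᵀ * v := by rw [← Matrix.mul_assoc ((1 : Matrix a a ℝ) - v * M * vᵀ)⁻¹,
            Matrix.nonsing_inv_mul _ h, Matrix.one_mul]
  exact eq_mul_inv_of_mul_eq hu h2


lemma herm_tr {M : Matrix N N ℝ} (h : M.IsHermitian) : Mᵀ = M := by
  rw [← Matrix.conjTranspose_eq_transpose_of_trivial]; exact h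

lemma conj_psd {M : Matrix a a ℝ} (hM : M.PosSemidef) (K : Matrix a b ℝ) :
    (Kᵀ * M * K).PosSemidef := by
  rw [← Matrix.conjTranspose_eq_transpose_of_trivial]
  exact hM.conjTranspose_mul_mul_same K

lemma conj_psd' {M : Matrix a a ℝ} (hM : M.PosSemidef) (K : Matrix b a ℝ) :
    (K * M * Kᵀ).PosSemidef := by
  rw [← Matrix.conjTranspose_eq_transpose_of_trivial]
  exact hM.mul_mul_conjTranspose_same K

lemma conj_psd_sym {M s : Matrix N N ℝ} (hM : M.PosSemidef) (hs : sᵀ = s) :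
    (s * M * s).PosSemidef := by
  nth_rewrite 1 [← hs]; exact conj_psd hM s

lemma tmul_psd (K : Matrix a b ℝ) : (Kᵀ * K).PosSemidef := by
  rw [← Matrix.conjTranspose_eq_transpose_of_trivial]
  exact Matrix.posSemidef_conjTranspose_mul_self K

lemma posDef_of_det {M : Matrix N N ℝ} (hM : M.PosSemidef) (hdet : IsUnit M.det) :
    M.PosDef := by
  refine Matrix.PosDef.of_dotProduct_mulVec_pos hM.1 (fun x hx => ?_)
  rcases (hM.dotProduct_mulVec_nonneg x).lt_or_eq with h | h
  · exact h
  · exfalso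
    have h0 : M *ᵥ x = 0 := (hM.dotProduct_mulVec_zero_iff x).mp h.symm
    have hinj : Function.Injective (M.mulVec) :=
      Matrix.mulVec_injective_iff_isUnit.mpr ((Matrix.isUnit_iff_isUnit_det M).mpr hdet)
    exact hx (hinj (by simpa using h0))

lemma pd_unit_det {M : Matrix N N ℝ} (hM : M.PosDef) : IsUnit M.det :=
  hM.det_pos.ne'.isUnit

lemma conj_pd {M s : Matrix N N ℝ} (hM : M.PosDef) (hs : sᵀ = s) (hu : IsUnit s.det) :
    (s * M * s).PosDef := by
  refine posDef_of_det (conj_psd_sym hM.posSemidef hs) ?_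
  rw [Matrix.det_mul, Matrix.det_mul]
  exact (hu.mul (pd_unit_det hM)).mul hu

/-! ### flip lemmas -/

lemma dot_self_nonneg (x : N → ℝ) : 0 ≤ x ⬝ᵥ x :=
  Finset.sum_nonneg fun i _ => mul_self_nonneg _

lemma dot_cs (x y : N → ℝ) : (x ⬝ᵥ y) * (x ⬝ᵥ y) ≤ (x ⬝ᵥ x) * (y ⬝ᵥ y) := by
  have := Finset.sum_mul_sq_le_sq_mul_sq Finset.univ x y
  simpa [dotProduct, pow_two] using this

lemma quad_one_sub (P : Matrix a b ℝ) (x : a → ℝ) :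
    x ⬝ᵥ (((1 : Matrix a a ℝ) - P * Pᵀ) *ᵥ x) = x ⬝ᵥ x - (Pᵀ *ᵥ x) ⬝ᵥ (Pᵀ *ᵥ x) := by
  rw [Matrix.sub_mulVec, Matrix.one_mulVec, dotProduct_sub, ← Matrix.mulVec_mulVec,
    Matrix.dotProduct_mulVec x P, ← Matrix.mulVec_transpose]

lemma flip_psd {P : Matrix a b ℝ} (h : ((1 : Matrix b b ℝ) - Pᵀ * P).PosSemidef) :
    ((1 : Matrix a a ℝ) - P * Pᵀ).PosSemidef := by
  have hcontr : ∀ z : b → ℝ, (P *ᵥ z) ⬝ᵥ (P *ᵥ z) ≤ z ⬝ᵥ z := by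
    intro z
    have h2 := h.dotProduct_mulVec_nonneg z
    have hq := quad_one_sub Pᵀ z
    rw [Matrix.transpose_transpose] at hq
    simp only [star_trivial] at h2
    rw [hq] at h2
    linarith
  have herm : ((1 : Matrix a a ℝ) - P * Pᵀ).IsHermitian := by
    refine Matrix.isHermitian_one.sub ?_
    rw [← Matrix.conjTranspose_eq_transpose_of_trivial]
    exact Matrix.isHermitian_mul_conjTranspose_self P
  refine Matrix.PosSemidef.of_dotProduct_mulVec_nonneg herm (fun x => ?_)
  simp only [star_trivial]
  rw [quad_one_sub P x]
  set y := Pᵀ *ᵥ x with hy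
  have hα : 0 ≤ y ⬝ᵥ y := dot_self_nonneg y
  rcases hα.lt_or_eq with hpos | hzero
  · have hid : x ⬝ᵥ (P *ᵥ y) = y ⬝ᵥ y := by
      rw [Matrix.dotProduct_mulVec x P, ← Matrix.mulVec_transpose]
    have hcs := dot_cs x (P *ᵥ y)
    rw [hid] at hcs
    have hb := hcontr y
    have hx2 : 0 ≤ x ⬝ᵥ x := dot_self_nonneg x
    nlinarith [hcs, hb, hx2, hpos]
  · rw [← hzero] at *
    linarith [dot_self_nonneg x]

lemma flip_pd {P : Matrix a b ℝ} (h : ((1 : Matrix b b ℝ) - Pᵀ * P).PosDef) :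
    ((1 : Matrix a a ℝ) - P * Pᵀ).PosDef := by
  refine posDef_of_det (flip_psd h.posSemidef) ?_
  rw [Matrix.det_one_sub_mul_comm]
  exact pd_unit_det h

/-! ### sqrt helpers -/

noncomputable def _root_.Matrix.PosSemidef.sqrt {M : Matrix N N ℝ} (hM : M.PosSemidef) :
    Matrix N N ℝ :=
  (hM.1.eigenvectorUnitary : Matrix N N ℝ) *
    diagonal (fun i => ((Real.sqrt (hM.1.eigenvalues i) : ℝ) : ℝ)) *
    (star (hM.1.eigenvectorUnitary : Matrix N N ℝ))

theorem _root_.Matrix.PosSemidef.posSemidef_sqrt {M : Matrix N N ℝ} (hM : M.PosSemidef) :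
    hM.sqrt.PosSemidef := by
  unfold Matrix.PosSemidef.sqrt
  rw [Matrix.star_eq_conjTranspose]
  exact (Matrix.PosSemidef.diagonal (fun i => Real.sqrt_nonneg _)).mul_mul_conjTranspose_same _

theorem _root_.Matrix.PosSemidef.sqrt_mul_self {M : Matrix N N ℝ} (hM : M.PosSemidef) :
    hM.sqrt * hM.sqrt = M := by
  have hU : star (hM.1.eigenvectorUnitary : Matrix N N ℝ) *
      (hM.1.eigenvectorUnitary : Matrix N N ℝ) = 1 := Unitary.coe_star_mul_self _
  have hspec := hM.1.spectral_theorem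
  rw [Unitary.conjStarAlgAut_apply] at hspec
  have hD : diagonal (fun i => ((Real.sqrt (hM.1.eigenvalues i) : ℝ) : ℝ)) *
      diagonal (fun i => ((Real.sqrt (hM.1.eigenvalues i) : ℝ) : ℝ))
      = diagonal (RCLike.ofReal ∘ hM.1.eigenvalues) := by
    rw [diagonal_mul_diagonal]; congr 1; funext i
    simp [Real.mul_self_sqrt (hM.eigenvalues_nonneg i)]
  refine Eq.trans ?_ hspec.symm
  unfold Matrix.PosSemidef.sqrt
  rw [← hD]
  simp only [Matrix.mul_assoc]
  rw [← Matrix.mul_assoc (star _) _ _, hU, Matrix.one_mul]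

lemma sqrt_sym {M : Matrix N N ℝ} (hM : M.PosSemidef) : hM.sqrtᵀ = hM.sqrt :=
  herm_tr hM.posSemidef_sqrt.1

lemma sqrt_pd {M : Matrix N N ℝ} (hM : M.PosDef) : (hM.posSemidef.sqrt).PosDef := by
  refine posDef_of_det hM.posSemidef.posSemidef_sqrt ?_
  have hdet : hM.posSemidef.sqrt.det * hM.posSemidef.sqrt.det = M.det := by
    rw [← Matrix.det_mul, hM.posSemidef.sqrt_mul_self]
  exact isUnit_of_mul_isUnit_left (x := hM.posSemidef.sqrt.det)
    (by rw [hdet]; exact pd_unit_det hM)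

/-! ### inverse antitone -/

lemma inv_antitone {P Q : Matrix N N ℝ} (hP : P.PosDef) (hQ : Q.PosDef)
    (h : (Q - P).PosSemidef) : (P⁻¹ - Q⁻¹).PosSemidef := by
  have hQu : IsUnit Q.det := pd_unit_det hQ
  have hQi : Q⁻¹.PosDef := hQ.inv
  set q := hQi.posSemidef.sqrt with hqdef
  have hqs : qᵀ = q := sqrt_sym hQi.posSemidef
  have hqq : q * q = Q⁻¹ := hQi.posSemidef.sqrt_mul_self
  have hq_pd : q.PosDef := sqrt_pd hQi
  have hqu : IsUnit q.det := pd_unit_det hq_pd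
  have h1 : q * Q⁻¹ = Q⁻¹ * q := by rw [← hqq, Matrix.mul_assoc]
  have hcomm : Q * q = q * Q := by
    calc Q * q = Q * (q * (Q⁻¹ * Q)) := by rw [Matrix.nonsing_inv_mul _ hQu, Matrix.mul_one]
    _ = Q * ((q * Q⁻¹) * Q) := by rw [Matrix.mul_assoc]
    _ = Q * ((Q⁻¹ * q) * Q) := by rw [h1]
    _ = (Q * Q⁻¹) * (q * Q) := by simp only [Matrix.mul_assoc]
    _ = q * Q := by rw [Matrix.mul_nonsing_inv _ hQu, Matrix.one_mul]
  have hqQq : q * Q * q = 1 := by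
    rw [← hcomm, Matrix.mul_assoc, hqq, Matrix.mul_nonsing_inv _ hQu]
  set M := q * P * q with hMdef
  have hMpsd : M.PosSemidef := conj_psd_sym hP.posSemidef hqs
  have hMpd : M.PosDef := by
    refine posDef_of_det hMpsd ?_
    rw [hMdef, Matrix.det_mul, Matrix.det_mul]
    exact (hqu.mul (pd_unit_det hP)).mul hqu
  have hMu : IsUnit M.det := pd_unit_det hMpd
  have h1M : ((1 : Matrix N N ℝ) - M).PosSemidef := by
    have he : (1 : Matrix N N ℝ) - M = q * (Q - P) * q := by
      rw [Matrix.mul_sub, Matrix.sub_mul, hqQq, hMdef]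
    rw [he]; exact conj_psd_sym h hqs
  set m := hMpd.posSemidef.sqrt with hmdef
  have hms : mᵀ = m := sqrt_sym hMpd.posSemidef
  have hmm : m * m = M := hMpd.posSemidef.sqrt_mul_self
  have hm_pd : m.PosDef := sqrt_pd hMpd
  have hmu : IsUnit m.det := pd_unit_det hm_pd
  have hmis : (m⁻¹)ᵀ = m⁻¹ := by rw [Matrix.transpose_nonsing_inv, hms]
  have hmm_inv : m⁻¹ * m⁻¹ = M⁻¹ := by rw [← Matrix.mul_inv_rev, hmm]
  have hkey : M⁻¹ - 1 = m⁻¹ * ((1 : Matrix N N ℝ) - M) * m⁻¹ := by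
    rw [Matrix.mul_sub, Matrix.mul_one, Matrix.sub_mul, hmm_inv, ← hmm,
      ← Matrix.mul_assoc, Matrix.mul_assoc (m⁻¹ * m), Matrix.nonsing_inv_mul _ hmu,
      Matrix.one_mul, Matrix.mul_nonsing_inv _ hmu]
  have hMinv1 : (M⁻¹ - 1).PosSemidef := by
    rw [hkey]; exact conj_psd_sym h1M hmis
  have hfin : P⁻¹ - Q⁻¹ = q * (M⁻¹ - 1) * q := by
    have hMinv : M⁻¹ = q⁻¹ * P⁻¹ * q⁻¹ := by
      rw [hMdef, Matrix.mul_inv_rev, Matrix.mul_inv_rev, Matrix.mul_assoc]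
    rw [Matrix.mul_sub, Matrix.sub_mul, Matrix.mul_one, hqq, hMinv]
    congr 1
    symm
    calc q * (q⁻¹ * P⁻¹ * q⁻¹) * q
        = (q * q⁻¹) * P⁻¹ * (q⁻¹ * q) := by simp only [Matrix.mul_assoc]
      _ = P⁻¹ := by rw [Matrix.mul_nonsing_inv _ hqu, Matrix.nonsing_inv_mul _ hqu,
            Matrix.one_mul, Matrix.mul_one]
  rw [hfin]; exact conj_psd_sym hMinv1 hqs

/-! ### Kronecker helpers -/

lemma kron_mul (A B : Matrix N N ℝ) :
    (A ⊗ₖ (1 : Matrix c c ℝ)) * (B ⊗ₖ (1 : Matrix c c ℝ)) = (A * B) ⊗ₖ (1 : Matrix c c ℝ) := by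
  rw [← Matrix.mul_kronecker_mul, Matrix.one_mul]

lemma kron_sub (A B : Matrix N N ℝ) :
    (A - B) ⊗ₖ (1 : Matrix c c ℝ) = A ⊗ₖ (1 : Matrix c c ℝ) - B ⊗ₖ (1 : Matrix c c ℝ) := by
  ext ⟨i, k⟩ ⟨j, l⟩
  simp [Matrix.kroneckerMap_apply, Matrix.sub_apply, sub_mul]

lemma kron_one : ((1 : Matrix N N ℝ) ⊗ₖ (1 : Matrix c c ℝ)) = 1 :=
  Matrix.one_kronecker_one

lemma kron_tr (A : Matrix N N ℝ) :
    (A ⊗ₖ (1 : Matrix c c ℝ))ᵀ = Aᵀ ⊗ₖ (1 : Matrix c c ℝ) := by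
  rw [← Matrix.kroneckerMap_transpose, Matrix.transpose_one]

lemma kron_inv (A : Matrix N N ℝ) :
    (A ⊗ₖ (1 : Matrix c c ℝ))⁻¹ = A⁻¹ ⊗ₖ (1 : Matrix c c ℝ) := by
  rw [Matrix.inv_kronecker, inv_one]

lemma kron_psd {A : Matrix N N ℝ} (hA : A.PosSemidef) :
    (A ⊗ₖ (1 : Matrix c c ℝ)).PosSemidef := by
  have hs : (hA.sqrt ⊗ₖ (1 : Matrix c c ℝ))ᵀ = hA.sqrt ⊗ₖ (1 : Matrix c c ℝ) := by
    rw [kron_tr, sqrt_sym]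
  have : A ⊗ₖ (1 : Matrix c c ℝ) =
      (hA.sqrt ⊗ₖ (1 : Matrix c c ℝ))ᵀ * (hA.sqrt ⊗ₖ (1 : Matrix c c ℝ)) := by
    rw [hs, kron_mul, hA.sqrt_mul_self]
  rw [this]; exact tmul_psd _

lemma kron_pd {A : Matrix N N ℝ} (hA : A.PosDef) :
    (A ⊗ₖ (1 : Matrix c c ℝ)).PosDef := by
  refine posDef_of_det (kron_psd hA.posSemidef) ?_
  rw [Matrix.det_kronecker, Matrix.det_one, one_pow, mul_one]
  exact (pd_unit_det hA).pow _

lemma unit_one_add_psd_mul {G H : Matrix N N ℝ} (hG : G.PosSemidef) (hH : H.PosSemidef) :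
    IsUnit ((1 : Matrix N N ℝ) + G * H).det := by
  have hxs : hH.sqrtᵀ = hH.sqrt := sqrt_sym hH
  have h1 : (1 : Matrix N N ℝ) + G * H = 1 + (G * hH.sqrt) * hH.sqrt := by
    rw [Matrix.mul_assoc, hH.sqrt_mul_self]
  rw [h1, Matrix.det_one_add_mul_comm, ← Matrix.mul_assoc]
  exact pd_unit_det (Matrix.PosDef.add_posSemidef Matrix.PosDef.one
    (conj_psd_sym hG hxs))

/-- `H (1+GH)⁻¹ = √H (1 + √H G √H)⁻¹ √H` and positivity. -/
lemma psd_resolvent {G H : Matrix N N ℝ} (hG : G.PosSemidef) (hH : H.PosSemidef) :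
    (H * ((1 : Matrix N N ℝ) + G * H)⁻¹).PosSemidef := by
  have hxs : hH.sqrtᵀ = hH.sqrt := sqrt_sym hH
  have hPD : ((1 : Matrix N N ℝ) + hH.sqrt * G * hH.sqrt).PosDef :=
    Matrix.PosDef.add_posSemidef Matrix.PosDef.one (conj_psd_sym hG hxs)
  have hdet2 : IsUnit ((1 : Matrix N N ℝ) - hH.sqrt * (-G) * hH.sqrtᵀ).det := by
    rw [hxs, Matrix.mul_neg, Matrix.neg_mul, sub_neg_eq_add]
    exact pd_unit_det hPD
  obtain ⟨hu, hid⟩ := sandwich hH.sqrt (-G) hdet2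
  rw [hxs] at hid
  rw [hH.sqrt_mul_self] at hid
  rw [Matrix.neg_mul, sub_neg_eq_add] at hid
  rw [Matrix.mul_neg, Matrix.neg_mul, sub_neg_eq_add] at hid
  rw [hid]
  exact conj_psd_sym (hPD.inv).posSemidef hxs

/-- facts about `N(E) = E (1 - Y E)⁻¹`. -/
lemma Ndiff {Y E : Matrix N N ℝ} (hY : Y.PosDef) (hE : E.PosSemidef)
    (hE2 : ((1 : Matrix N N ℝ) - hE.sqrt * Y * hE.sqrt).PosDef) :
    IsUnit ((1 : Matrix N N ℝ) - Y * E).det ∧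
      (E * ((1 : Matrix N N ℝ) - Y * E)⁻¹ - E).PosSemidef ∧
      (E * ((1 : Matrix N N ℝ) - Y * E)⁻¹).PosSemidef ∧
      E * ((1 : Matrix N N ℝ) - Y * E)⁻¹ =
        hE.sqrt * ((1 : Matrix N N ℝ) - hE.sqrt * Y * hE.sqrt)⁻¹ * hE.sqrt := by
  have hes : hE.sqrtᵀ = hE.sqrt := sqrt_sym hE
  have hdet : IsUnit ((1 : Matrix N N ℝ) - hE.sqrt * Y * hE.sqrtᵀ).det := by
    rw [hes]; exact pd_unit_det hE2
  obtain ⟨hu, hid⟩ := sandwich hE.sqrt Y hdet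
  rw [hes, hE.sqrt_mul_self] at hid hu
  have hEinv : (((1 : Matrix N N ℝ) - hE.sqrt * Y * hE.sqrt)⁻¹).PosDef := hE2.inv
  have hgein : (((1 : Matrix N N ℝ) - hE.sqrt * Y * hE.sqrt)⁻¹ - 1).PosSemidef := by
    have h1 := inv_antitone hE2 Matrix.PosDef.one
      (by simpa using conj_psd_sym hY.posSemidef hes)
    rwa [inv_one] at h1
  refine ⟨hu, ?_, ?_, hid⟩
  · have : E * ((1 : Matrix N N ℝ) - Y * E)⁻¹ - E =
        hE.sqrt * (((1 : Matrix N N ℝ) - hE.sqrt * Y * hE.sqrt)⁻¹ - 1) * hE.sqrt := by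
      rw [Matrix.mul_sub, Matrix.sub_mul, Matrix.mul_one, hE.sqrt_mul_self, hid]
    rw [this]; exact conj_psd_sym hgein hes
  · rw [hid]; exact conj_psd_sym hEinv.posSemidef hes

lemma hE2_of {Y Xs E : Matrix N N ℝ} (hY : Y.PosDef) (hXs : Xs.PosSemidef)
    (hE : E.PosSemidef) (hXE : (Xs - E).PosSemidef)
    (hY2 : ((1 : Matrix N N ℝ) - hXs.sqrt * Y * hXs.sqrt).PosDef) :
    ((1 : Matrix N N ℝ) - hE.sqrt * Y * hE.sqrt).PosDef := by
  have hsX : hXs.sqrtᵀ = hXs.sqrt := sqrt_sym hXs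
  have hsY : hY.posSemidef.sqrtᵀ = hY.posSemidef.sqrt := sqrt_sym hY.posSemidef
  have hsE : hE.sqrtᵀ = hE.sqrt := sqrt_sym hE
  -- Step A : 1 - sY Xs sY PD
  have hA0 : ((1 : Matrix N N ℝ) - (hY.posSemidef.sqrt * hXs.sqrt)ᵀ *
      (hY.posSemidef.sqrt * hXs.sqrt)).PosDef := by
    have : (hY.posSemidef.sqrt * hXs.sqrt)ᵀ * (hY.posSemidef.sqrt * hXs.sqrt)
        = hXs.sqrt * Y * hXs.sqrt := by
      rw [Matrix.transpose_mul, hsX, hsY, Matrix.mul_assoc, ← Matrix.mul_assoc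
        hY.posSemidef.sqrt, hY.posSemidef.sqrt_mul_self, ← Matrix.mul_assoc]
    rw [this]; exact hY2
  have hA : ((1 : Matrix N N ℝ) - hY.posSemidef.sqrt * Xs * hY.posSemidef.sqrt).PosDef := by
    have h1 := flip_pd hA0
    have : (hY.posSemidef.sqrt * hXs.sqrt) * (hY.posSemidef.sqrt * hXs.sqrt)ᵀ
        = hY.posSemidef.sqrt * Xs * hY.posSemidef.sqrt := by
      rw [Matrix.transpose_mul, hsX, hsY, Matrix.mul_assoc, ← Matrix.mul_assoc
        hXs.sqrt, hXs.sqrt_mul_self, ← Matrix.mul_assoc]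
    rwa [this] at h1
  -- Step B : 1 - sY E sY PD
  have hB : ((1 : Matrix N N ℝ) - hY.posSemidef.sqrt * E * hY.posSemidef.sqrt).PosDef := by
    have heq : (1 : Matrix N N ℝ) - hY.posSemidef.sqrt * E * hY.posSemidef.sqrt
        = hY.posSemidef.sqrt * (Xs - E) * hY.posSemidef.sqrt +
          ((1 : Matrix N N ℝ) - hY.posSemidef.sqrt * Xs * hY.posSemidef.sqrt) := by
      rw [Matrix.mul_sub, Matrix.sub_mul]; abel
    rw [heq]
    exact Matrix.PosDef.posSemidef_add (conj_psd_sym hXE hsY) hA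
  -- Step C : flip back
  have hC0 : ((1 : Matrix N N ℝ) - (hE.sqrt * hY.posSemidef.sqrt)ᵀ *
      (hE.sqrt * hY.posSemidef.sqrt)).PosDef := by
    have : (hE.sqrt * hY.posSemidef.sqrt)ᵀ * (hE.sqrt * hY.posSemidef.sqrt)
        = hY.posSemidef.sqrt * E * hY.posSemidef.sqrt := by
      rw [Matrix.transpose_mul, hsE, hsY, Matrix.mul_assoc, ← Matrix.mul_assoc
        hE.sqrt, hE.sqrt_mul_self, ← Matrix.mul_assoc]
    rw [this]; exact hB
  have h2 := flip_pd hC0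
  have : (hE.sqrt * hY.posSemidef.sqrt) * (hE.sqrt * hY.posSemidef.sqrt)ᵀ
      = hE.sqrt * Y * hE.sqrt := by
    rw [Matrix.transpose_mul, hsE, hsY, Matrix.mul_assoc, ← Matrix.mul_assoc
      hY.posSemidef.sqrt, hY.posSemidef.sqrt_mul_self, ← Matrix.mul_assoc]
  rwa [this] at h2

lemma ric_core {G Xh Th : Matrix N N ℝ}
    (hXu : IsUnit ((1 : Matrix N N ℝ) + G * Xh).det)
    (hTu : IsUnit ((1 : Matrix N N ℝ) + G * Th).det) :
    IsUnit ((1 : Matrix N N ℝ) - (1 + G * Xh)⁻¹ * G * (Xh - Th)).det ∧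
    Xh * ((1 : Matrix N N ℝ) + G * Xh)⁻¹ - Th * ((1 : Matrix N N ℝ) + G * Th)⁻¹ =
      ((1 : Matrix N N ℝ) + Xh * G)⁻¹ *
        ((Xh - Th) * (((1 : Matrix N N ℝ) - (1 + G * Xh)⁻¹ * G * (Xh - Th))⁻¹ *
          ((1 : Matrix N N ℝ) + G * Xh)⁻¹)) := by
  set P := ((1 : Matrix N N ℝ) + G * Xh)⁻¹ with hPdef
  set Pt := ((1 : Matrix N N ℝ) + G * Th)⁻¹ with hPtdef
  set E := Xh - Th with hEdef
  have e1 : ((1 : Matrix N N ℝ) + G * Xh) * P = 1 := Matrix.mul_nonsing_inv _ hXu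
  have e1' : P * ((1 : Matrix N N ℝ) + G * Xh) = 1 := Matrix.nonsing_inv_mul _ hXu
  have e2 : ((1 : Matrix N N ℝ) + G * Th) * Pt = 1 := Matrix.mul_nonsing_inv _ hTu
  -- hprod
  have hprod : ((1 : Matrix N N ℝ) - G * E * P) * ((1 : Matrix N N ℝ) + G * Xh)
      = (1 : Matrix N N ℝ) + G * Th := by
    have expand : ((1 : Matrix N N ℝ) - G * E * P) * ((1 : Matrix N N ℝ) + G * Xh)
        = (1 + G * Xh) - G * E * (P * ((1 : Matrix N N ℝ) + G * Xh)) := by noncomm_ring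
    rw [expand, e1', Matrix.mul_one, hEdef, Matrix.mul_sub]
    noncomm_ring
  have hu1 : IsUnit ((1 : Matrix N N ℝ) - G * E * P).det := by
    have hd := congrArg Matrix.det hprod
    rw [Matrix.det_mul] at hd
    rw [← hd] at hTu
    exact isUnit_of_mul_isUnit_left hTu
  -- Pt = P * (1 - G E P)⁻¹
  have hPt : Pt = P * ((1 : Matrix N N ℝ) - G * E * P)⁻¹ := by
    rw [hPtdef, ← hprod, Matrix.mul_inv_rev]
  -- pushthrough
  have hu1' : IsUnit ((1 : Matrix N N ℝ) - (G * E) * P).det := hu1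
  obtain ⟨hu2, hpush⟩ := pushthrough P (G * E) hu1'
  -- hu2 : IsUnit (1 - P * (G*E)).det
  have hassoc : P * (G * E) = P * G * E := by rw [Matrix.mul_assoc]
  rw [hassoc] at hu2 hpush
  refine ⟨hu2, ?_⟩
  -- key identity
  have key1 : ((1 : Matrix N N ℝ) + Xh * G) * (Xh * P - Th * Pt) = E * Pt := by
    have expand : ((1 : Matrix N N ℝ) + Xh * G) * (Xh * P - Th * Pt) - E * Pt
        = Xh * (((1 : Matrix N N ℝ) + G * Xh) * P) -
          Xh * (((1 : Matrix N N ℝ) + G * Th) * Pt) := by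
      rw [hEdef]; noncomm_ring
    have : ((1 : Matrix N N ℝ) + Xh * G) * (Xh * P - Th * Pt) - E * Pt = 0 := by
      rw [expand, e1, e2]; noncomm_ring
    linear_combination (norm := noncomm_ring) this
  have hXGu : IsUnit ((1 : Matrix N N ℝ) + Xh * G).det := by
    rwa [Matrix.det_one_add_mul_comm]
  have hfin := eq_inv_mul_of_eq_mul hXGu key1
  rw [← hfin, hPt, ← hpush]

lemma step_key {a c : Type*} [Fintype a] [Fintype c] [DecidableEq a] [DecidableEq c]
    (As : Matrix (a × c) a ℝ) (Bs : Matrix (a × c) (a × c) ℝ)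
    (Y E : Matrix a a ℝ) (hY : Y.PosDef) (hE : E.PosSemidef)
    (hY1 : ((Y ⊗ₖ (1 : Matrix c c ℝ)) - (Bs + As * Y * Asᵀ)).PosSemidef)
    (hE2 : ((1 : Matrix a a ℝ) - hE.sqrt * Y * hE.sqrt).PosDef) :
    IsUnit ((1 : Matrix (a × c) (a × c) ℝ) - Bs * (E ⊗ₖ (1 : Matrix c c ℝ))).det ∧
    ∀ F : Matrix a a ℝ,
      F = Asᵀ * (E ⊗ₖ (1 : Matrix c c ℝ)) *
            ((1 : Matrix (a × c) (a × c) ℝ) - Bs * (E ⊗ₖ (1 : Matrix c c ℝ)))⁻¹ * As →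
      F.PosSemidef ∧ IsUnit ((1 : Matrix a a ℝ) - Y * F).det ∧
        ((Asᵀ * ((E * ((1 : Matrix a a ℝ) - Y * E)⁻¹) ⊗ₖ (1 : Matrix c c ℝ)) * As)
          - F * ((1 : Matrix a a ℝ) - Y * F)⁻¹).PosSemidef := by
  classical
  set sE := hE.sqrt with hsEdef
  have hsE : sEᵀ = sE := sqrt_sym hE
  set e : Matrix (a × c) (a × c) ℝ := sE ⊗ₖ (1 : Matrix c c ℝ) with hedef
  have hes : eᵀ = e := by rw [hedef, kron_tr, hsE]
  have hee : e * e = E ⊗ₖ (1 : Matrix c c ℝ) := by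
    rw [hedef, kron_mul, hE.sqrt_mul_self]
  set Yh : Matrix (a × c) (a × c) ℝ := Y ⊗ₖ (1 : Matrix c c ℝ) with hYhdef
  -- T := 1 - e * Yh * e
  have hT_eq : (1 : Matrix (a × c) (a × c) ℝ) - e * Yh * e
      = ((1 : Matrix a a ℝ) - sE * Y * sE) ⊗ₖ (1 : Matrix c c ℝ) := by
    rw [hedef, hYhdef, kron_mul, kron_mul, kron_sub, kron_one]
  set T : Matrix (a × c) (a × c) ℝ := (1 : Matrix (a × c) (a × c) ℝ) - e * Yh * e with hTdef
  have hT_eq' : T = ((1 : Matrix a a ℝ) - sE * Y * sE) ⊗ₖ (1 : Matrix c c ℝ) := hT_eq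
  have hT_pd : T.PosDef := by rw [hT_eq']; exact kron_pd hE2
  -- hY1'
  have hY1' : (Yh - Bs - As * Y * Asᵀ).PosSemidef := by
    have : Yh - Bs - As * Y * Asᵀ = Yh - (Bs + As * Y * Asᵀ) := by abel
    rw [this]; exact hY1
  -- R := 1 - e * Bs * e  is PD
  set R : Matrix (a × c) (a × c) ℝ := (1 : Matrix (a × c) (a × c) ℝ) - e * Bs * e with hRdef
  have hR_split : R = (e * (Yh - Bs - As * Y * Asᵀ) * e + e * (As * Y * Asᵀ) * e) + T := by
    rw [hRdef, hTdef]
    have : e * (Yh - Bs - As * Y * Asᵀ) * e = e * Yh * e - e * Bs * e -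
        e * (As * Y * Asᵀ) * e := by
      rw [Matrix.mul_sub, Matrix.mul_sub, Matrix.sub_mul, Matrix.sub_mul]
    rw [this]; abel
  have hAYA : (As * Y * Asᵀ).PosSemidef := by
    have := conj_psd' hY.posSemidef As
    exact this
  have hR_pd : R.PosDef := by
    rw [hR_split]
    exact Matrix.PosDef.posSemidef_add
      ((conj_psd_sym hY1' hes).add (conj_psd_sym hAYA hes)) hT_pd
  have hRu : IsUnit R.det := pd_unit_det hR_pd
  -- rho := sqrt R
  set ρ := hR_pd.posSemidef.sqrt with hρdef
  have hρs : ρᵀ = ρ := sqrt_sym hR_pd.posSemidef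
  have hρρ : ρ * ρ = R := hR_pd.posSemidef.sqrt_mul_self
  have hρ_pd : ρ.PosDef := sqrt_pd hR_pd
  have hρu : IsUnit ρ.det := pd_unit_det hρ_pd
  have hρi_pd : (ρ⁻¹).PosDef := hρ_pd.inv
  have hρiu : IsUnit (ρ⁻¹).det := pd_unit_det hρi_pd
  have hρis : (ρ⁻¹)ᵀ = ρ⁻¹ := by rw [Matrix.transpose_nonsing_inv, hρs]
  have hρiρ : ρ⁻¹ * ρ = 1 := Matrix.nonsing_inv_mul _ hρu
  have hρρi : ρ * ρ⁻¹ = 1 := Matrix.mul_nonsing_inv _ hρu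
  have hRinv : ρ⁻¹ * ρ⁻¹ = R⁻¹ := by rw [← Matrix.mul_inv_rev, hρρ]
  -- sandwich 1 : Ê (1 - Bs Ê)⁻¹ = e R⁻¹ e
  have hsand1det : IsUnit ((1 : Matrix (a × c) (a × c) ℝ) - e * Bs * eᵀ).det := by
    rw [hes, ← hRdef]; exact hRu
  obtain ⟨hu1, hid1⟩ := sandwich e Bs hsand1det
  rw [hes, hee] at hu1 hid1
  rw [← hRdef] at hid1
  refine ⟨hu1, ?_⟩
  intro F hF
  -- v := ρ⁻¹ * (e * As)
  set v : Matrix (a × c) a ℝ := ρ⁻¹ * (e * As) with hvdef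
  have hvT : vᵀ = Asᵀ * e * ρ⁻¹ := by
    rw [hvdef, Matrix.transpose_mul, Matrix.transpose_mul, hρis, hes, Matrix.mul_assoc]
  have hFv : F = vᵀ * v := by
    rw [hF, Matrix.mul_assoc (Asᵀ) _, hid1, hvT, hvdef]
    rw [← hRinv]
    simp only [Matrix.mul_assoc]
  have hF_psd : F.PosSemidef := by rw [hFv]; exact tmul_psd v
  -- W := v * Y * vᵀ ;  1 - W  ⪰ ρ⁻¹ T ρ⁻¹  ≻ 0
  set W : Matrix (a × c) (a × c) ℝ := v * Y * vᵀ with hWdef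
  have hρTρ_pd : (ρ⁻¹ * T * ρ⁻¹).PosDef := conj_pd hT_pd hρis hρiu
  have hkey1 : ((1 : Matrix (a × c) (a × c) ℝ) - W) - ρ⁻¹ * T * ρ⁻¹
      = (ρ⁻¹ * e) * (Yh - Bs - As * Y * Asᵀ) * (e * ρ⁻¹) := by
    have hYh' : e * Yh * e = 1 - T := by rw [hTdef]; abel
    have hBs' : e * Bs * e = 1 - R := by rw [hRdef]; abel
    have expand : (ρ⁻¹ * e) * (Yh - Bs - As * Y * Asᵀ) * (e * ρ⁻¹)
        = ρ⁻¹ * (e * Yh * e) * ρ⁻¹ - ρ⁻¹ * (e * Bs * e) * ρ⁻¹ -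
          ρ⁻¹ * (e * (As * Y * Asᵀ) * e) * ρ⁻¹ := by
      simp only [Matrix.mul_sub, Matrix.sub_mul, Matrix.mul_assoc]
    rw [expand, hYh', hBs']
    have hWeq : ρ⁻¹ * (e * (As * Y * Asᵀ) * e) * ρ⁻¹ = W := by
      rw [hWdef, hvdef, hvT]
      simp only [Matrix.mul_assoc]
    rw [hWeq]
    have hRR : ρ⁻¹ * R * ρ⁻¹ = 1 := by
      rw [← hρρ, ← Matrix.mul_assoc, hρiρ, Matrix.one_mul, hρρi]
    simp only [Matrix.mul_sub, Matrix.sub_mul]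
    rw [hRR]
    abel
  -- 1 - W is PD
  have hconj : ((ρ⁻¹ * e) * (Yh - Bs - As * Y * Asᵀ) * (e * ρ⁻¹)).PosSemidef := by
    have h := conj_psd' hY1' (ρ⁻¹ * e)
    have ht : (ρ⁻¹ * e)ᵀ = e * ρ⁻¹ := by rw [Matrix.transpose_mul, hes, hρis]
    rwa [ht] at h
  have h1W_pd : ((1 : Matrix (a × c) (a × c) ℝ) - W).PosDef := by
    have hsplit : (1 : Matrix (a × c) (a × c) ℝ) - W
        = (((1 : Matrix (a × c) (a × c) ℝ) - W) - ρ⁻¹ * T * ρ⁻¹) + ρ⁻¹ * T * ρ⁻¹ := by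
      abel
    rw [hsplit, hkey1]
    exact Matrix.PosDef.posSemidef_add hconj hρTρ_pd
  have h1Wu : IsUnit ((1 : Matrix (a × c) (a × c) ℝ) - W).det := pd_unit_det h1W_pd
  have hIA : ((ρ⁻¹ * T * ρ⁻¹)⁻¹ - ((1 : Matrix (a × c) (a × c) ℝ) - W)⁻¹).PosSemidef := by
    apply inv_antitone hρTρ_pd h1W_pd
    rw [hkey1]; exact hconj
  have hρTρinv : (ρ⁻¹ * T * ρ⁻¹)⁻¹ = ρ * T⁻¹ * ρ := by
    rw [Matrix.mul_inv_rev, Matrix.mul_inv_rev,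
      Matrix.nonsing_inv_nonsing_inv _ hρu, Matrix.mul_assoc]
  -- sandwich 2 : F (1 - Y F)⁻¹ = vᵀ (1 - W)⁻¹ v
  have hsand2det : IsUnit ((1 : Matrix (a × c) (a × c) ℝ) - v * Y * vᵀ).det := by
    rw [← hWdef]; exact h1Wu
  obtain ⟨hu2, hid2⟩ := sandwich v Y hsand2det
  rw [← hFv] at hu2 hid2
  rw [← hWdef] at hid2
  -- sandwich 3 : Ê (1 - Yh Ê)⁻¹ = e T⁻¹ e
  have hsand3det : IsUnit ((1 : Matrix (a × c) (a × c) ℝ) - e * Yh * eᵀ).det := by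
    rw [hes, ← hTdef]; exact pd_unit_det hT_pd
  obtain ⟨hu3, hid3⟩ := sandwich e Yh hsand3det
  rw [hes, hee] at hid3
  rw [← hTdef] at hid3
  -- Kronecker form of N(E)
  have hNE : (E ⊗ₖ (1 : Matrix c c ℝ)) *
        ((1 : Matrix (a × c) (a × c) ℝ) - Yh * (E ⊗ₖ (1 : Matrix c c ℝ)))⁻¹
      = (E * ((1 : Matrix a a ℝ) - Y * E)⁻¹) ⊗ₖ (1 : Matrix c c ℝ) := by
    rw [hYhdef, kron_mul, ← kron_one, ← kron_sub, kron_inv, kron_mul]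
  -- cancellation helpers
  have c1 : ∀ X : Matrix (a × c) a ℝ, ρ⁻¹ * (ρ * X) = X := fun X => by
    rw [← Matrix.mul_assoc, hρiρ, Matrix.one_mul]
  have c2 : ∀ X : Matrix (a × c) a ℝ, ρ * (ρ⁻¹ * X) = X := fun X => by
    rw [← Matrix.mul_assoc, hρρi, Matrix.one_mul]
  have hfinal : vᵀ * (ρ * T⁻¹ * ρ) * v
      = Asᵀ * ((E * ((1 : Matrix a a ℝ) - Y * E)⁻¹) ⊗ₖ (1 : Matrix c c ℝ)) * As := by
    rw [← hNE, hid3, hvT, hvdef]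
    simp only [Matrix.mul_assoc]
    rw [c2, c1]
  refine ⟨hF_psd, hu2, ?_⟩
  have hdiff : Asᵀ * ((E * ((1 : Matrix a a ℝ) - Y * E)⁻¹) ⊗ₖ (1 : Matrix c c ℝ)) * As
        - F * ((1 : Matrix a a ℝ) - Y * F)⁻¹
      = vᵀ * ((ρ * T⁻¹ * ρ) - ((1 : Matrix (a × c) (a × c) ℝ) - W)⁻¹) * v := by
    rw [Matrix.mul_sub, Matrix.sub_mul, hfinal, hid2]
  rw [hdiff, ← hρTρinv]
  exact conj_psd hIA v

end SDARE

open SDARE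

namespace SDARE

lemma BBt_psd {n m r : ℕ} (B : Matrix (Fin n × Fin r) (Fin m) ℝ) :
    (B * Bᵀ).PosSemidef := by
  have := tmul_psd Bᵀ
  rwa [Matrix.transpose_transpose] at this

lemma dop_psd {n m l r : ℕ} (A : Matrix (Fin n × Fin r) (Fin n) ℝ)
    (B : Matrix (Fin n × Fin r) (Fin m) ℝ) (C : Matrix (Fin l) (Fin n) ℝ)
    {X : Matrix (Fin n) (Fin n) ℝ} (hX : X.PosSemidef) : (Dop A B C X).PosSemidef := by
  unfold Dop
  have hres := psd_resolvent (BBt_psd B) (kron_psd (c := Fin r) hX)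
  have hassoc : Aᵀ * (X ⊗ₖ (1 : Matrix (Fin r) (Fin r) ℝ)) *
      (1 + B * Bᵀ * (X ⊗ₖ (1 : Matrix (Fin r) (Fin r) ℝ)))⁻¹ * A
      = Aᵀ * ((X ⊗ₖ (1 : Matrix (Fin r) (Fin r) ℝ)) *
        (1 + B * Bᵀ * (X ⊗ₖ (1 : Matrix (Fin r) (Fin r) ℝ)))⁻¹) * A := by
    simp only [Matrix.mul_assoc]
  rw [hassoc]
  exact (conj_psd hres A).add (tmul_psd C)

lemma ric_diff {n m l r : ℕ} (A : Matrix (Fin n × Fin r) (Fin n) ℝ)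
    (B : Matrix (Fin n × Fin r) (Fin m) ℝ) (C : Matrix (Fin l) (Fin n) ℝ)
    {Xs Xt : Matrix (Fin n) (Fin n) ℝ} (hXs : Xs.PosSemidef) (hXt : Xt.PosSemidef)
    (As : Matrix (Fin n × Fin r) (Fin n) ℝ)
    (Bs : Matrix (Fin n × Fin r) (Fin n × Fin r) ℝ)
    (hAs : As = (1 + B * Bᵀ * (Xs ⊗ₖ (1 : Matrix (Fin r) (Fin r) ℝ)))⁻¹ * A)
    (hBs : Bs = (1 + B * Bᵀ * (Xs ⊗ₖ (1 : Matrix (Fin r) (Fin r) ℝ)))⁻¹ * (B * Bᵀ)) :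
    Dop A B C Xs - Dop A B C Xt =
      Asᵀ * ((Xs - Xt) ⊗ₖ (1 : Matrix (Fin r) (Fin r) ℝ)) *
        ((1 : Matrix (Fin n × Fin r) (Fin n × Fin r) ℝ)
          - Bs * ((Xs - Xt) ⊗ₖ (1 : Matrix (Fin r) (Fin r) ℝ)))⁻¹ * As := by
  have hG : (B * Bᵀ).PosSemidef := BBt_psd B
  unfold Dop
  set Xh := Xs ⊗ₖ (1 : Matrix (Fin r) (Fin r) ℝ) with hXhdef
  set Th := Xt ⊗ₖ (1 : Matrix (Fin r) (Fin r) ℝ) with hThdef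
  have hXu : IsUnit ((1 : Matrix (Fin n × Fin r) (Fin n × Fin r) ℝ) + B * Bᵀ * Xh).det :=
    unit_one_add_psd_mul hG (kron_psd hXs)
  have hTu : IsUnit ((1 : Matrix (Fin n × Fin r) (Fin n × Fin r) ℝ) + B * Bᵀ * Th).det :=
    unit_one_add_psd_mul hG (kron_psd hXt)
  obtain ⟨hu, hcore⟩ := ric_core hXu hTu
  have hEh : (Xs - Xt) ⊗ₖ (1 : Matrix (Fin r) (Fin r) ℝ) = Xh - Th := kron_sub Xs Xt
  have hXh_sym : Xhᵀ = Xh := by rw [hXhdef, kron_tr, herm_tr hXs.1]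
  have hG_sym : (B * Bᵀ)ᵀ = B * Bᵀ := by
    rw [Matrix.transpose_mul, Matrix.transpose_transpose]
  have hAsT : Asᵀ = Aᵀ * ((1 : Matrix (Fin n × Fin r) (Fin n × Fin r) ℝ)
      + Xh * (B * Bᵀ))⁻¹ := by
    rw [hAs, Matrix.transpose_mul, Matrix.transpose_nonsing_inv, Matrix.transpose_add,
      Matrix.transpose_one, Matrix.transpose_mul, hXh_sym, hG_sym]
  have hD : (Aᵀ * Xh * (1 + B * Bᵀ * Xh)⁻¹ * A + Cᵀ * C) -
        (Aᵀ * Th * (1 + B * Bᵀ * Th)⁻¹ * A + Cᵀ * C)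
      = Aᵀ * (Xh * (1 + B * Bᵀ * Xh)⁻¹ - Th * (1 + B * Bᵀ * Th)⁻¹) * A := by
    rw [Matrix.mul_sub, Matrix.sub_mul]
    simp only [Matrix.mul_assoc]
    abel
  rw [hD, hcore, hEh, hAsT, hAs, hBs]
  simp only [Matrix.mul_assoc]

end SDARE

open SDARE in
theorem stmt5 {n m l r : ℕ} (hn : 0 < n) (hm : 0 < m) (hl : 0 < l) (hr : 0 < r)
    (A : Matrix (Fin n × Fin r) (Fin n) ℝ)
    (B : Matrix (Fin n × Fin r) (Fin m) ℝ)
    (C : Matrix (Fin l) (Fin n) ℝ)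
    (Xseq : ℕ → Matrix (Fin n) (Fin n) ℝ)
    (h0 : Xseq 0 = 0)
    (hstep : ∀ t, Xseq (t + 1) = Dop A B C (Xseq t))
    (Xs : Matrix (Fin n) (Fin n) ℝ)
    (hXs : Xs.PosSemidef) (hsol : Xs = Dop A B C Xs)
    (As : Matrix (Fin n × Fin r) (Fin n) ℝ)
    (Bs : Matrix (Fin n × Fin r) (Fin n × Fin r) ℝ)
    (hAs : As = (1 + B * Bᵀ * (Xs ⊗ₖ (1 : Matrix (Fin r) (Fin r) ℝ)))⁻¹ * A)
    (hBs : Bs = (1 + B * Bᵀ * (Xs ⊗ₖ (1 : Matrix (Fin r) (Fin r) ℝ)))⁻¹ * (B * Bᵀ))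
    (Y : Matrix (Fin n) (Fin n) ℝ) (hY : Y.PosDef)
    (hY1 : ((Y ⊗ₖ (1 : Matrix (Fin r) (Fin r) ℝ)) - (Bs + As * Y * Asᵀ)).PosSemidef)
    (hY2 : ((1 : Matrix (Fin n) (Fin n) ℝ) - psdSqrtOld hXs * Y * psdSqrtOld hXs).PosDef) :
    IsUnit ((1 : Matrix (Fin n) (Fin n) ℝ) - Y * Xs) ∧
    ∀ t : ℕ,
      (((fun S : Matrix (Fin n) (Fin n) ℝ =>
            Asᵀ * (S ⊗ₖ (1 : Matrix (Fin r) (Fin r) ℝ)) * As)^[t]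
          (Xs * ((1 : Matrix (Fin n) (Fin n) ℝ) - Y * Xs)⁻¹))
        - (Xs - Xseq t)).PosSemidef := by
  classical
  obtain ⟨hdetXs, hNd0a, hNd0b, -⟩ := Ndiff hY hXs hY2
  have main : ∀ t : ℕ, (Xseq t).PosSemidef ∧ (Xs - Xseq t).PosSemidef ∧
      ((fun S : Matrix (Fin n) (Fin n) ℝ =>
            Asᵀ * (S ⊗ₖ (1 : Matrix (Fin r) (Fin r) ℝ)) * As)^[t]
          (Xs * ((1 : Matrix (Fin n) (Fin n) ℝ) - Y * Xs)⁻¹)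
        - (Xs - Xseq t) * ((1 : Matrix (Fin n) (Fin n) ℝ)
            - Y * (Xs - Xseq t))⁻¹).PosSemidef := by
    intro t
    induction t with
    | zero =>
      refine ⟨by rw [h0]; exact Matrix.PosSemidef.zero,
        by rw [h0, sub_zero]; exact hXs, ?_⟩
      rw [h0, sub_zero, Function.iterate_zero_apply, sub_self]
      exact Matrix.PosSemidef.zero
    | succ t ih =>
      obtain ⟨hXt, hEt, hZt⟩ := ih
      have hXsubE : (Xs - (Xs - Xseq t)).PosSemidef := by
        rw [sub_sub_cancel]; exact hXt
      have hE2t := hE2_of hY hXs hEt hXsubE hY2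
      have hdiff := ric_diff A B C hXs hXt As Bs hAs hBs
      have hEsucc : Xs - Xseq (t + 1) = Dop A B C Xs - Dop A B C (Xseq t) := by
        rw [hstep t, ← hsol]
      obtain ⟨hu1, hstepkey⟩ := step_key As Bs Y (Xs - Xseq t) hY hEt hY1 hE2t
      obtain ⟨hFpsd, hFu, hFbound⟩ :=
        hstepkey (Xs - Xseq (t + 1)) (by rw [hEsucc, hdiff])
      refine ⟨by rw [hstep t]; exact dop_psd A B C hXt, hFpsd, ?_⟩
      simp only [Function.iterate_succ_apply']
      set Zt := (fun S : Matrix (Fin n) (Fin n) ℝ =>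
            Asᵀ * (S ⊗ₖ (1 : Matrix (Fin r) (Fin r) ℝ)) * As)^[t]
          (Xs * ((1 : Matrix (Fin n) (Fin n) ℝ) - Y * Xs)⁻¹) with hZtdef
      set Nt := (Xs - Xseq t) * ((1 : Matrix (Fin n) (Fin n) ℝ)
          - Y * (Xs - Xseq t))⁻¹ with hNtdef
      have hmono : (Asᵀ * (Zt ⊗ₖ (1 : Matrix (Fin r) (Fin r) ℝ)) * As
          - Asᵀ * (Nt ⊗ₖ (1 : Matrix (Fin r) (Fin r) ℝ)) * As).PosSemidef := by
        have heq : Asᵀ * ((Zt - Nt) ⊗ₖ (1 : Matrix (Fin r) (Fin r) ℝ)) * As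
            = Asᵀ * (Zt ⊗ₖ (1 : Matrix (Fin r) (Fin r) ℝ)) * As
              - Asᵀ * (Nt ⊗ₖ (1 : Matrix (Fin r) (Fin r) ℝ)) * As := by
          rw [kron_sub, Matrix.mul_sub, Matrix.sub_mul]
        rw [← heq]
        exact conj_psd (kron_psd hZt) As
      have htotal := hmono.add hFbound
      have hre : Asᵀ * (Zt ⊗ₖ (1 : Matrix (Fin r) (Fin r) ℝ)) * As
            - Asᵀ * (Nt ⊗ₖ (1 : Matrix (Fin r) (Fin r) ℝ)) * As
          + (Asᵀ * (((Xs - Xseq t) * ((1 : Matrix (Fin n) (Fin n) ℝ)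
              - Y * (Xs - Xseq t))⁻¹) ⊗ₖ (1 : Matrix (Fin r) (Fin r) ℝ)) * As
            - (Xs - Xseq (t + 1)) * ((1 : Matrix (Fin n) (Fin n) ℝ)
              - Y * (Xs - Xseq (t + 1)))⁻¹)
          = Asᵀ * (Zt ⊗ₖ (1 : Matrix (Fin r) (Fin r) ℝ)) * As
            - (Xs - Xseq (t + 1)) * ((1 : Matrix (Fin n) (Fin n) ℝ)
              - Y * (Xs - Xseq (t + 1)))⁻¹ := by
        rw [hNtdef]; abel
      rw [hre] at htotal
      exact htotal
  constructor
  · exact (Matrix.isUnit_iff_isUnit_det _).mpr hdetXs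
  · intro t
    obtain ⟨hXt, hEt, hZt⟩ := main t
    have hXsubE : (Xs - (Xs - Xseq t)).PosSemidef := by
      rw [sub_sub_cancel]; exact hXt
    have hE2t := hE2_of hY hXs hEt hXsubE hY2
    obtain ⟨-, hNdiff, -, -⟩ := Ndiff hY hEt hE2t
    have := hZt.add hNdiff
    have hre : (fun S : Matrix (Fin n) (Fin n) ℝ =>
            Asᵀ * (S ⊗ₖ (1 : Matrix (Fin r) (Fin r) ℝ)) * As)^[t]
          (Xs * ((1 : Matrix (Fin n) (Fin n) ℝ) - Y * Xs)⁻¹)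
        - (Xs - Xseq t) * ((1 : Matrix (Fin n) (Fin n) ℝ) - Y * (Xs - Xseq t))⁻¹
        + ((Xs - Xseq t) * ((1 : Matrix (Fin n) (Fin n) ℝ) - Y * (Xs - Xseq t))⁻¹
          - (Xs - Xseq t))
        = (fun S : Matrix (Fin n) (Fin n) ℝ =>
            Asᵀ * (S ⊗ₖ (1 : Matrix (Fin r) (Fin r) ℝ)) * As)^[t]
          (Xs * ((1 : Matrix (Fin n) (Fin n) ℝ) - Y * Xs)⁻¹)
        - (Xs - Xseq t) := by abel
    rw [hre] at this
    exact this
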